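/- arXiv:2310.18904 — 6 statements merged into one kernel-verified Lean document; each statement's English description precedes it below -/
import Mathlib

section
/- Let Ā ∈ ℝ^{N×N} be symmetric positive semidefinite with eigendecomposition Ā = UΣUᵀ, and suppose its k largest eigenvalues are positive and pairwise distinct and strictly separated from the rest: σ₁ > σ₂ > … > σ_k > σ_{k+1} ≥ … ≥ σ_N ≥ 0 and σ_k > 0. Then over all pairs (F, S) with F ∈ ℝ^{N×k} satisfying FᵀF = I_k and S = diag(s₁,…,s_k) diagonal with s₁ ≥ … ≥ s_k ≥ 0, the minimizers of ‖Ā − F S Fᵀ‖_F² are exactly the pairs with S = diag(σ₁,…,σ_k) and F = U^k E for some diagonal matrix E with diagonal entries in {+1, −1}. In particular S is uniquely determined and F is determined up to the sign of each column (sign feature identifiability of tri-factor contrastive learning). -/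
open Matrix BigOperators

/-- Squared Frobenius norm of a real matrix. -/
noncomputable def frobSq {m n : Type*} [Fintype m] [Fintype n] (M : Matrix m n ℝ) : ℝ :=
  ∑ i, ∑ j, (M i j) ^ 2

open Finset

/-- Abel summation identity. -/
lemma abel_id (k : ℕ) (τ g : ℕ → ℝ) (hτ : ∀ t, k ≤ t → τ t = 0) :
    ∑ j ∈ range k, τ j * g j
      = ∑ t ∈ range k, (τ t - τ (t+1)) * ∑ j ∈ range (t+1), g j := by
  have step1 : ∀ t ∈ range k, (τ t - τ (t+1)) * ∑ j ∈ range (t+1), g j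
      = ∑ j ∈ range k, (if j ≤ t then (τ t - τ (t+1)) * g j else 0) := by
    intro t ht
    rw [Finset.sum_ite, Finset.sum_const_zero, add_zero, Finset.mul_sum]
    apply Finset.sum_nbij' (fun a => a) (fun a => a) <;> intro a ha <;>
      simp only [mem_filter, mem_range] at * <;> omega
  rw [Finset.sum_congr rfl step1, Finset.sum_comm]
  apply Finset.sum_congr rfl
  intro j hj
  simp only [mem_range] at hj
  have : ∑ t ∈ range k, (if j ≤ t then (τ t - τ (t+1)) * g j else 0)
      = (∑ t ∈ Ico j k, (τ t - τ (t+1))) * g j := by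
    rw [Finset.sum_mul, ← Finset.sum_filter]
    apply Finset.sum_congr
    · ext a; simp only [mem_filter, mem_range, mem_Ico]; omega
    · intros; ring
  rw [this, Finset.sum_Ico_eq_sum_range]
  have : ∑ i ∈ range (k - j), (τ (j + i) - τ (j + i + 1)) = τ (j+0) - τ (j + (k-j)) := by
    have := Finset.sum_range_sub' (fun i => τ (j + i)) (k - j)
    simpa [add_assoc] using this
  rw [this]
  have : j + (k - j) = k := by omega
  rw [this, hτ k le_rfl]
  ring


lemma split_sum (Nn t : ℕ) (ht : t ≤ Nn) (f : ℕ → ℝ) :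
    ∑ i ∈ range Nn, f i = ∑ i ∈ range t, f i + ∑ i ∈ Ico t Nn, f i := by
  simp only [Finset.range_eq_Ico]
  rw [Finset.sum_Ico_consecutive f (Nat.zero_le t) ht]

lemma dom_sum (Nn t : ℕ) (σ' c : ℕ → ℝ) (ht : t ≤ Nn)
    (hσa : ∀ i j : ℕ, i ≤ j → σ' j ≤ σ' i)
    (hc0 : ∀ i, 0 ≤ c i) (hc1 : ∀ i, c i ≤ 1)
    (hcs : ∑ i ∈ range Nn, c i = t) :
    ∑ i ∈ range Nn, σ' i * c i ≤ ∑ i ∈ range t, σ' i := by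
  set θ := σ' t with hθ
  rw [split_sum Nn t ht]
  have h1 : ∑ i ∈ range t, σ' i * c i ≤ ∑ i ∈ range t, (σ' i + θ * c i - θ) := by
    apply Finset.sum_le_sum
    intro i hi
    simp only [mem_range] at hi
    have hσi : θ ≤ σ' i := hσa i t hi.le
    nlinarith [hc1 i, hc0 i]
  have h2 : ∑ i ∈ Ico t Nn, σ' i * c i ≤ ∑ i ∈ Ico t Nn, θ * c i := by
    apply Finset.sum_le_sum
    intro i hi
    simp only [mem_Ico] at hi
    have : σ' i ≤ θ := hσa t i hi.1
    nlinarith [hc0 i]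
  have hc : ∑ i ∈ range t, c i + ∑ i ∈ Ico t Nn, c i = t := by
    rw [← split_sum Nn t ht]; exact hcs
  have hsum1 : ∑ i ∈ range t, (σ' i + θ * c i - θ)
      = ∑ i ∈ range t, σ' i + θ * ∑ i ∈ range t, c i - t * θ := by
    rw [Finset.sum_sub_distrib, Finset.sum_add_distrib, ← Finset.mul_sum]
    simp [mul_comm]
  have hsum2 : ∑ i ∈ Ico t Nn, θ * c i = θ * ∑ i ∈ Ico t Nn, c i := by
    rw [Finset.mul_sum]
  have hlin : θ * (∑ i ∈ range t, c i) + θ * (∑ i ∈ Ico t Nn, c i) = θ * t := by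
    rw [← mul_add, hc]
  linarith

lemma dom_sum_eq (Nn t : ℕ) (σ' c : ℕ → ℝ) (ht1 : 1 ≤ t) (ht : t ≤ Nn)
    (hlo : ∀ i, i < t - 1 → σ' (t-1) < σ' i)
    (hhi : ∀ i, t ≤ i → σ' i < σ' (t-1))
    (hmid : ∀ i, i < t → σ' (t-1) ≤ σ' i)
    (hc0 : ∀ i, 0 ≤ c i) (hc1 : ∀ i, c i ≤ 1)
    (hcs : ∑ i ∈ range Nn, c i = t)
    (heq : ∑ i ∈ range Nn, σ' i * c i = ∑ i ∈ range t, σ' i) :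
    ∀ i < Nn, c i = if i < t then 1 else 0 := by
  set θ := σ' (t-1) with hθ
  have expand : ∑ i ∈ range t, (σ' i - θ) * (c i - 1) + ∑ i ∈ Ico t Nn, (σ' i - θ) * c i
      = (∑ i ∈ range Nn, σ' i * c i) - (∑ i ∈ range t, σ' i)
        - θ * ((∑ i ∈ range Nn, c i) - t) := by
    rw [split_sum Nn t ht (fun i => σ' i * c i), split_sum Nn t ht c]
    simp only [sub_mul, mul_sub, mul_one, mul_add, Finset.sum_sub_distrib, Finset.mul_sum,
      Finset.sum_const, card_range, nsmul_eq_mul]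
    ring
  rw [heq, hcs] at expand
  simp only [sub_self, mul_zero] at expand
  have hn1 : ∀ i ∈ range t, (σ' i - θ) * (c i - 1) ≤ 0 := by
    intro i hi
    simp only [mem_range] at hi
    have : θ ≤ σ' i := hmid i hi
    nlinarith [hc1 i]
  have hn2 : ∀ i ∈ Ico t Nn, (σ' i - θ) * c i ≤ 0 := by
    intro i hi
    simp only [mem_Ico] at hi
    have : σ' i < θ := hhi i hi.1
    nlinarith [hc0 i]
  have hs1 : ∑ i ∈ range t, (σ' i - θ) * (c i - 1) = 0 ∧
      ∑ i ∈ Ico t Nn, (σ' i - θ) * c i = 0 := by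
    have a1 := Finset.sum_nonpos hn1
    have a2 := Finset.sum_nonpos hn2
    constructor <;> linarith
  have hz1 := (Finset.sum_eq_zero_iff_of_nonpos hn1).mp hs1.1
  have hz2 := (Finset.sum_eq_zero_iff_of_nonpos hn2).mp hs1.2
  have clo : ∀ i, i < t - 1 → c i = 1 := by
    intro i hi
    have h := hz1 i (mem_range.mpr (by omega))
    have h2 : θ < σ' i := hlo i hi
    rcases mul_eq_zero.mp h with h' | h'
    · linarith
    · linarith
  have chi : ∀ i, t ≤ i → i < Nn → c i = 0 := by
    intro i hge hlt
    have h := hz2 i (mem_Ico.mpr ⟨hge, hlt⟩)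
    have h2 : σ' i < θ := hhi i hge
    rcases mul_eq_zero.mp h with h' | h'
    · linarith
    · exact h'
  have cmid : c (t-1) = 1 := by
    have hIco0 : ∑ i ∈ Ico t Nn, c i = 0 :=
      Finset.sum_eq_zero fun i hi => chi i (mem_Ico.mp hi).1 (mem_Ico.mp hi).2
    have hrt : ∑ i ∈ range t, c i = (t : ℝ) := by
      have := split_sum Nn t ht c
      rw [hcs, hIco0] at this
      linarith
    have ht' : t = (t-1) + 1 := by omega
    rw [ht', Finset.sum_range_succ] at hrt
    have hones : ∑ i ∈ range (t-1), c i = ((t-1 : ℕ) : ℝ) := by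
      rw [Finset.sum_congr rfl (fun i hi => clo i (mem_range.mp hi))]
      simp
    rw [hones, Nat.cast_add, Nat.cast_one] at hrt
    linarith
  intro i hi
  by_cases hit : i < t
  · rw [if_pos hit]
    rcases Nat.lt_or_ge i (t-1) with h' | h'
    · exact clo i h'
    · have : i = t - 1 := by omega
      rw [this]; exact cmid
  · rw [if_neg hit]
    exact chi i (by omega) hi

section KF
variable (Nn kk : ℕ) (σ' : ℕ → ℝ) (P : ℕ → ℕ → ℝ)

lemma kyfan_partial (hk : kk ≤ Nn) (t : ℕ) (ht : t ≤ kk)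
    (hσa : ∀ i j : ℕ, i ≤ j → σ' j ≤ σ' i)
    (hP0 : ∀ i j, 0 ≤ P i j)
    (hcol : ∀ j, j < kk → ∑ i ∈ range Nn, P i j = 1)
    (hrow : ∀ i, ∑ j ∈ range kk, P i j ≤ 1) :
    ∑ j ∈ range t, (∑ i ∈ range Nn, σ' i * P i j) ≤ ∑ j ∈ range t, σ' j := by
  have hswap : ∑ j ∈ range t, (∑ i ∈ range Nn, σ' i * P i j)
      = ∑ i ∈ range Nn, σ' i * (∑ j ∈ range t, P i j) := by
    rw [Finset.sum_comm]
    exact Finset.sum_congr rfl fun i _ => (Finset.mul_sum _ _ _).symm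
  rw [hswap]
  apply dom_sum Nn t σ' (fun i => ∑ j ∈ range t, P i j) (le_trans ht hk) hσa
  · intro i; exact Finset.sum_nonneg fun j _ => hP0 i j
  · intro i
    calc ∑ j ∈ range t, P i j ≤ ∑ j ∈ range kk, P i j :=
          Finset.sum_le_sum_of_subset_of_nonneg (Finset.range_subset_range.mpr ht)
            (fun j _ _ => hP0 i j)
      _ ≤ 1 := hrow i
  · rw [Finset.sum_comm]
    rw [Finset.sum_congr rfl fun j hj => hcol j (lt_of_lt_of_le (mem_range.mp hj) ht)]
    simp

lemma kyfan (hk : kk ≤ Nn) (s' : ℕ → ℝ)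
    (hσa : ∀ i j : ℕ, i ≤ j → σ' j ≤ σ' i)
    (hsa : ∀ i j : ℕ, i ≤ j → s' j ≤ s' i) (hs0 : ∀ i, 0 ≤ s' i)
    (hsk : ∀ j, kk ≤ j → s' j = 0)
    (hP0 : ∀ i j, 0 ≤ P i j)
    (hcol : ∀ j, j < kk → ∑ i ∈ range Nn, P i j = 1)
    (hrow : ∀ i, ∑ j ∈ range kk, P i j ≤ 1) :
    ∑ j ∈ range kk, s' j * (∑ i ∈ range Nn, σ' i * P i j)
      ≤ ∑ j ∈ range kk, s' j * σ' j := by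
  rw [abel_id kk s' _ hsk, abel_id kk s' _ hsk]
  apply Finset.sum_le_sum
  intro t ht
  simp only [mem_range] at ht
  have hd : 0 ≤ s' t - s' (t+1) := by linarith [hsa t (t+1) (Nat.le_succ t)]
  exact mul_le_mul_of_nonneg_left
    (kyfan_partial Nn kk σ' P hk (t+1) ht hσa hP0 hcol hrow) hd

lemma kyfan_eq (hk : kk ≤ Nn)
    (hlo : ∀ t, t < kk → ∀ i, i < t → σ' t < σ' i)
    (hhi : ∀ t, t < kk → ∀ i, t < i → σ' i < σ' t)
    (hpos : ∀ t, t < kk → 0 < σ' t)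
    (hσa : ∀ i j : ℕ, i ≤ j → σ' j ≤ σ' i)
    (hP0 : ∀ i j, 0 ≤ P i j)
    (hcol : ∀ j, j < kk → ∑ i ∈ range Nn, P i j = 1)
    (hrow : ∀ i, ∑ j ∈ range kk, P i j ≤ 1)
    (heq : ∑ j ∈ range kk, σ' j * (∑ i ∈ range Nn, σ' i * P i j)
      = ∑ j ∈ range kk, σ' j * σ' j) :
    ∀ i, i < Nn → ∀ j, j < kk → P i j = if i = j then 1 else 0 := by
  set a : ℕ → ℝ := fun j => ∑ i ∈ range Nn, σ' i * P i j with ha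
  set τ : ℕ → ℝ := fun j => if j < kk then σ' j else 0 with hτdef
  have hτk : ∀ t, kk ≤ t → τ t = 0 := fun t ht => by simp [hτdef, not_lt.mpr ht]
  have hcong : ∀ g : ℕ → ℝ, ∑ j ∈ range kk, τ j * g j = ∑ j ∈ range kk, σ' j * g j :=
    fun g => Finset.sum_congr rfl fun j hj => by
      simp [hτdef, mem_range.mp hj]
  have habel : ∑ t ∈ range kk, (τ t - τ (t+1)) * ∑ j ∈ range (t+1), (σ' j - a j) = 0 := by
    rw [← abel_id kk τ _ hτk, hcong]
    have : ∑ j ∈ range kk, σ' j * (σ' j - a j)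
        = ∑ j ∈ range kk, σ' j * σ' j - ∑ j ∈ range kk, σ' j * a j := by
      rw [← Finset.sum_sub_distrib]
      exact Finset.sum_congr rfl fun j _ => by ring
    rw [this, heq]; ring
  have hterm : ∀ t ∈ range kk, 0 ≤ (τ t - τ (t+1)) * ∑ j ∈ range (t+1), (σ' j - a j) := by
    intro t ht
    simp only [mem_range] at ht
    have hD : 0 ≤ ∑ j ∈ range (t+1), (σ' j - a j) := by
      have := kyfan_partial Nn kk σ' P hk (t+1) ht hσa hP0 hcol hrow
      rw [Finset.sum_sub_distrib]
      linarith
    have hcoef : 0 ≤ τ t - τ (t+1) := by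
      by_cases h : t + 1 < kk
      · simp only [hτdef, if_pos ht, if_pos h]
        exact sub_nonneg.mpr (hσa t (t+1) (Nat.le_succ t))
      · simp only [hτdef, if_pos ht, if_neg h, sub_zero]
        exact (hpos t ht).le
    exact mul_nonneg hcoef hD
  have hzero := (Finset.sum_eq_zero_iff_of_nonneg hterm).mp habel
  have hD0 : ∀ t, t < kk → ∑ j ∈ range (t+1), a j = ∑ j ∈ range (t+1), σ' j := by
    intro t ht
    have h := hzero t (mem_range.mpr ht)
    have hcoefpos : 0 < τ t - τ (t+1) := by
      by_cases h2 : t + 1 < kk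
      · simp only [hτdef, if_pos ht, if_pos h2]
        exact sub_pos.mpr (hhi t ht (t+1) (Nat.lt_succ_self t))
      · simp only [hτdef, if_pos ht, if_neg h2, sub_zero]
        exact hpos t ht
    have := mul_eq_zero.mp h
    rcases this with h' | h'
    · exact absurd h' (ne_of_gt hcoefpos)
    · rw [Finset.sum_sub_distrib] at h'
      linarith [h']
  -- partial column sums are indicators
  have Hc : ∀ t, t ≤ kk → ∀ i, i < Nn →
      ∑ j ∈ range t, P i j = if i < t then 1 else 0 := by
    intro t htk i hi
    rcases Nat.eq_zero_or_pos t with rfl | ht1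
    · simp
    · have hcs : ∑ i ∈ range Nn, (∑ j ∈ range t, P i j) = (t:ℝ) := by
        rw [Finset.sum_comm]
        rw [Finset.sum_congr rfl fun j hj => hcol j (lt_of_lt_of_le (mem_range.mp hj) htk)]
        simp
      have heqt : ∑ i ∈ range Nn, σ' i * (∑ j ∈ range t, P i j) = ∑ i ∈ range t, σ' i := by
        have hswap : ∑ i ∈ range Nn, σ' i * (∑ j ∈ range t, P i j)
            = ∑ j ∈ range t, a j := by
          simp only [ha, Finset.mul_sum]
          exact Finset.sum_comm
        have hD := hD0 (t-1) (by omega)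
        rw [show t-1+1 = t by omega] at hD
        rw [hswap, hD]
      exact dom_sum_eq Nn t σ' _ ht1 (le_trans htk hk)
        (fun i hi2 => hlo (t-1) (by omega) i hi2)
        (fun i hi2 => hhi (t-1) (by omega) i (by omega))
        (fun i hi2 => by
          rcases Nat.lt_or_ge i (t-1) with h' | h'
          · exact (hlo (t-1) (by omega) i h').le
          · have : i = t - 1 := by omega
            rw [this])
        (fun i => Finset.sum_nonneg fun j _ => hP0 i j)
        (fun i => le_trans (Finset.sum_le_sum_of_subset_of_nonneg
          (Finset.range_subset_range.mpr htk) (fun j _ _ => hP0 i j)) (hrow i))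
        hcs heqt i hi
  intro i hi j hj
  have h1 := Hc (j+1) hj i hi
  have h0 := Hc j hj.le i hi
  rw [Finset.sum_range_succ] at h1
  rw [h0] at h1
  rcases lt_trichotomy i j with h | h | h
  · rw [if_neg (by omega : ¬ i = j)]
    rw [if_pos h, if_pos (by omega : i < j+1)] at h1
    linarith
  · subst h
    rw [if_pos rfl]
    rw [if_neg (by omega : ¬ i < i), if_pos (by omega : i < i+1)] at h1
    linarith
  · rw [if_neg (by omega : ¬ i = j)]
    rw [if_neg (by omega : ¬ i < j), if_neg (by omega : ¬ i < j+1)] at h1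
    linarith
end KF



section MX
variable {N k : ℕ} (U : Matrix (Fin N) (Fin N) ℝ) (σ : Fin N → ℝ)

lemma frobSq_eq_trace {m n : Type*} [Fintype m] [Fintype n] (M : Matrix m n ℝ) :
    frobSq M = Matrix.trace (Mᵀ * M) := by
  unfold frobSq Matrix.trace
  simp only [Matrix.diag, Matrix.mul_apply, Matrix.transpose_apply, sq]
  exact Finset.sum_comm

lemma trace_diag_mul (d : Fin N → ℝ) (M : Matrix (Fin N) (Fin N) ℝ) :
    Matrix.trace (Matrix.diagonal d * M) = ∑ i, d i * M i i := by
  unfold Matrix.trace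
  simp [Matrix.diag, Matrix.diagonal_mul]

lemma ML1 (hUorth : Uᵀ * U = 1)
    (F : Matrix (Fin N) (Fin k) ℝ) (s : Fin k → ℝ) (hF : Fᵀ * F = 1) :
    frobSq (U * Matrix.diagonal σ * Uᵀ - F * Matrix.diagonal s * Fᵀ)
      = (∑ i, (σ i)^2) + (∑ j, (s j)^2)
        - 2 * ∑ j, s j * ∑ i, σ i * ((Uᵀ * F) i j)^2 := by
  have cancelU : ∀ (X : Matrix (Fin N) (Fin N) ℝ), Uᵀ * (U * X) = X := by
    intro X; rw [← Matrix.mul_assoc, hUorth, Matrix.one_mul]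
  have cancelF : ∀ (X : Matrix (Fin k) (Fin N) ℝ), Fᵀ * (F * X) = X := by
    intro X; rw [← Matrix.mul_assoc, hF, Matrix.one_mul]
  set D := Matrix.diagonal σ with hD
  set S := Matrix.diagonal s with hS
  set A := U * D * Uᵀ with hAd
  set B := F * S * Fᵀ with hBd
  have hAT : Aᵀ = A := by
    rw [hAd, Matrix.transpose_mul, Matrix.transpose_mul, Matrix.transpose_transpose, hD,
      Matrix.diagonal_transpose, Matrix.mul_assoc]
  have hBT : Bᵀ = B := by
    rw [hBd, Matrix.transpose_mul, Matrix.transpose_mul, Matrix.transpose_transpose, hS,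
      Matrix.diagonal_transpose, Matrix.mul_assoc]
  rw [frobSq_eq_trace, Matrix.transpose_sub, hAT, hBT, Matrix.sub_mul, Matrix.mul_sub,
    Matrix.mul_sub, Matrix.trace_sub, Matrix.trace_sub, Matrix.trace_sub]
  have hBA : Matrix.trace (B * A) = Matrix.trace (A * B) := Matrix.trace_mul_comm B A
  have t1 : Matrix.trace (A * A) = ∑ i, (σ i)^2 := by
    have : A * A = U * (D * (D * Uᵀ)) := by
      rw [hAd]
      simp only [Matrix.mul_assoc]
      rw [cancelU]
    rw [this, Matrix.trace_mul_comm, Matrix.mul_assoc, Matrix.mul_assoc, hUorth, Matrix.mul_one,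
      hD, Matrix.diagonal_mul_diagonal, Matrix.trace_diagonal]
    exact Finset.sum_congr rfl fun i _ => (sq (σ i)).symm
  have t2 : Matrix.trace (B * B) = ∑ j, (s j)^2 := by
    have : B * B = F * (S * (S * Fᵀ)) := by
      rw [hBd]
      simp only [Matrix.mul_assoc]
      rw [cancelF]
    rw [this, Matrix.trace_mul_comm, Matrix.mul_assoc, Matrix.mul_assoc, hF, Matrix.mul_one,
      hS, Matrix.diagonal_mul_diagonal, Matrix.trace_diagonal]
    exact Finset.sum_congr rfl fun j _ => (sq (s j)).symm
  have t3 : Matrix.trace (A * B) = ∑ j, s j * ∑ i, σ i * ((Uᵀ * F) i j)^2 := by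
    set G := Uᵀ * F with hG
    have : A * B = U * (D * (G * (S * Fᵀ))) := by
      rw [hAd, hBd, hG]
      simp only [Matrix.mul_assoc]
    rw [this, Matrix.trace_mul_comm]
    have : D * (G * (S * Fᵀ)) * U = D * (G * (S * Gᵀ)) := by
      rw [hG, Matrix.transpose_mul, Matrix.transpose_transpose]
      simp only [Matrix.mul_assoc]
    rw [this, hD, trace_diag_mul]
    have entry : ∀ i, (G * (S * Gᵀ)) i i = ∑ j, (G i j)^2 * s j := by
      intro i
      simp only [Matrix.mul_apply, Matrix.transpose_apply, hS, Matrix.diagonal_apply, ite_mul,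
        zero_mul, Finset.sum_ite_eq, Finset.mem_univ, if_true]
      exact Finset.sum_congr rfl fun j _ => by ring
    rw [Finset.sum_congr rfl fun i _ => by rw [entry i]]
    have hleft : ∑ i, σ i * ∑ j, (G i j)^2 * s j = ∑ i, ∑ j, σ i * ((G i j)^2 * s j) := by
      exact Finset.sum_congr rfl fun i _ => by rw [Finset.mul_sum]
    rw [hleft, Finset.sum_comm]
    exact Finset.sum_congr rfl fun j _ => by
      rw [Finset.mul_sum]
      exact Finset.sum_congr rfl fun i _ => by ring
  rw [t1, t2, t3, hBA, t3]
  ring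

lemma ML2 (hUorth : Uᵀ * U = 1)
    (F : Matrix (Fin N) (Fin k) ℝ) (hF : Fᵀ * F = 1) :
    ∀ j, ∑ i, ((Uᵀ * F) i j)^2 = 1 := by
  have hU2 : U * Uᵀ = 1 := mul_eq_one_comm.mp hUorth
  have hGtG : (Uᵀ * F)ᵀ * (Uᵀ * F) = 1 := by
    rw [Matrix.transpose_mul, Matrix.transpose_transpose, Matrix.mul_assoc,
      ← Matrix.mul_assoc U, hU2, Matrix.one_mul, hF]
  intro j
  have h2 : ((Uᵀ * F)ᵀ * (Uᵀ * F)) j j = (1 : Matrix (Fin k) (Fin k) ℝ) j j := by rw [hGtG]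
  rw [Matrix.mul_apply] at h2
  simp only [Matrix.transpose_apply, Matrix.one_apply_eq] at h2
  rw [← h2]
  exact Finset.sum_congr rfl fun i _ => sq _

lemma ML3 (hUorth : Uᵀ * U = 1)
    (F : Matrix (Fin N) (Fin k) ℝ) (hF : Fᵀ * F = 1) :
    ∀ i, ∑ j, ((Uᵀ * F) i j)^2 ≤ 1 := by
  have hU2 : U * Uᵀ = 1 := mul_eq_one_comm.mp hUorth
  set G := Uᵀ * F with hG
  have hGtG : Gᵀ * G = 1 := by
    rw [hG, Matrix.transpose_mul, Matrix.transpose_transpose, Matrix.mul_assoc,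
      ← Matrix.mul_assoc U, hU2, Matrix.one_mul, hF]
  set Pr := G * Gᵀ with hPr
  have hidem : Pr * Pr = Pr := by
    rw [hPr, Matrix.mul_assoc, ← Matrix.mul_assoc Gᵀ, hGtG, Matrix.one_mul]
  have hsymm : ∀ a b, Pr a b = Pr b a := by
    intro a b
    simp only [hPr, Matrix.mul_apply, Matrix.transpose_apply]
    exact Finset.sum_congr rfl fun j _ => by ring
  intro i
  have hxval : Pr i i = ∑ j, (G i j)^2 := by
    simp only [hPr, Matrix.mul_apply, Matrix.transpose_apply]
    exact Finset.sum_congr rfl fun j _ => (sq _).symm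
  have hx2 : Pr i i = ∑ m, (Pr i m)^2 := by
    conv_lhs => rw [← hidem]
    simp only [Matrix.mul_apply]
    exact Finset.sum_congr rfl fun m _ => by rw [sq, hsymm m i]
  have hge : (Pr i i)^2 ≤ Pr i i := by
    conv_rhs => rw [hx2]
    exact Finset.single_le_sum (f := fun m => (Pr i m)^2) (fun m _ => sq_nonneg _)
      (Finset.mem_univ i)
  have h0 : 0 ≤ Pr i i := by
    rw [hxval]; exact Finset.sum_nonneg fun j _ => sq_nonneg _
  have hle : Pr i i ≤ 1 := by nlinarith
  rw [hxval] at hle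
  exact hle
end MX


section CAND
variable {N k : ℕ} (hk : k ≤ N) (U : Matrix (Fin N) (Fin N) ℝ) (σ : Fin N → ℝ)

lemma hUE (hUorth : Uᵀ * U = 1) :
    ∀ a b : Fin N, (∑ m, U m a * U m b) = if a = b then 1 else 0 := by
  intro a b
  have h2 : (Uᵀ * U) a b = (1 : Matrix (Fin N) (Fin N) ℝ) a b := by rw [hUorth]
  rw [Matrix.mul_apply] at h2
  simp only [Matrix.transpose_apply, Matrix.one_apply] at h2
  rw [← h2]

lemma cand_entry (hUorth : Uᵀ * U = 1) (ε : Fin k → ℝ) :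
    ∀ (i : Fin N) (j : Fin k),
      (Uᵀ * (U.submatrix id (Fin.castLE hk) * Matrix.diagonal ε)) i j
        = (if i = Fin.castLE hk j then 1 else 0) * ε j := by
  intro i j
  rw [← Matrix.mul_assoc, Matrix.mul_diagonal]
  have : (Uᵀ * U.submatrix id (Fin.castLE hk)) i j = ∑ m, U m i * U m (Fin.castLE hk j) := by
    rw [Matrix.mul_apply]
    exact Finset.sum_congr rfl fun m _ => by simp [Matrix.submatrix_apply]
  rw [this, hUE U hUorth]

lemma cand_orth (hUorth : Uᵀ * U = 1) (ε : Fin k → ℝ) (hε : ∀ j, ε j = 1 ∨ ε j = -1) :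
    (U.submatrix id (Fin.castLE hk) * Matrix.diagonal ε)ᵀ
      * (U.submatrix id (Fin.castLE hk) * Matrix.diagonal ε) = 1 := by
  ext j j'
  rw [Matrix.mul_apply]
  have hsummand : ∀ i, ((U.submatrix id (Fin.castLE hk) * Matrix.diagonal ε)ᵀ) j i
      * (U.submatrix id (Fin.castLE hk) * Matrix.diagonal ε) i j'
      = (ε j * ε j') * (U i (Fin.castLE hk j) * U i (Fin.castLE hk j')) := by
    intro i
    simp only [Matrix.transpose_apply, Matrix.mul_diagonal, Matrix.submatrix_apply, id]
    ring
  rw [Finset.sum_congr rfl fun i _ => hsummand i, ← Finset.mul_sum,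
    hUE U hUorth]
  have hinj : (Fin.castLE hk j = Fin.castLE hk j') → j = j' := by
    intro h
    have h2 := congrArg (Fin.val : Fin N → ℕ) h
    simp only [Fin.coe_castLE] at h2
    exact Fin.ext h2
  by_cases h : j = j'
  · subst h
    rw [if_pos rfl, Matrix.one_apply_eq]
    rcases hε j with h' | h' <;> rw [h'] <;> norm_num
  · rw [if_neg (fun hc => h (hinj hc)), Matrix.one_apply_ne h]
    ring

lemma cand_q (hUorth : Uᵀ * U = 1) (ε : Fin k → ℝ) (hε : ∀ j, ε j = 1 ∨ ε j = -1) :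
    ∀ j : Fin k, ∑ i, σ i *
      ((Uᵀ * (U.submatrix id (Fin.castLE hk) * Matrix.diagonal ε)) i j)^2
      = σ (Fin.castLE hk j) := by
  intro j
  rw [Finset.sum_congr rfl fun i _ => by rw [cand_entry hk U hUorth ε i j]]
  rw [Finset.sum_eq_single (Fin.castLE hk j)]
  · rw [if_pos rfl]
    rcases hε j with h' | h' <;> rw [h'] <;> norm_num
  · intro b _ hb
    rw [if_neg hb]
    ring
  · intro h; exact absurd (Finset.mem_univ _) h
end CAND

section GLUE

/-- extend a `Fin n` indexed family by zero -/
noncomputable def extend (n : ℕ) (f : Fin n → ℝ) : ℕ → ℝ :=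
  fun m => if h : m < n then f ⟨m, h⟩ else 0

lemma extend_lt {n : ℕ} (f : Fin n → ℝ) (i : Fin n) : extend n f i = f i := by
  simp [extend]

lemma sum_fin_ext {n : ℕ} (f : Fin n → ℝ) (g : ℕ → ℝ) (h : ∀ i : Fin n, g i = f i) :
    ∑ i : Fin n, f i = ∑ i ∈ Finset.range n, g i := by
  rw [← Fin.sum_univ_eq_sum_range g n]
  exact Finset.sum_congr rfl fun i _ => (h i).symm

/-- squared entries of `G`, extended by zero -/
noncomputable def Pm {N k : ℕ} (G : Matrix (Fin N) (Fin k) ℝ) : ℕ → ℕ → ℝ :=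
  fun i j => if hi : i < N then if hj : j < k then (G ⟨i, hi⟩ ⟨j, hj⟩)^2 else 0 else 0

lemma Pm_nonneg {N k : ℕ} (G : Matrix (Fin N) (Fin k) ℝ) : ∀ i j, 0 ≤ Pm G i j := by
  intro i j
  unfold Pm
  split_ifs <;> first | exact sq_nonneg _ | exact le_refl 0

lemma Pm_col {N k : ℕ} (U : Matrix (Fin N) (Fin N) ℝ) (hUorth : Uᵀ * U = 1)
    (F : Matrix (Fin N) (Fin k) ℝ) (hF : Fᵀ * F = 1) :
    ∀ j, j < k → ∑ i ∈ Finset.range N, Pm (Uᵀ * F) i j = 1 := by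
  intro j hj
  rw [← sum_fin_ext (fun i : Fin N => ((Uᵀ * F) i ⟨j, hj⟩)^2) _
    (fun i => by simp [Pm, i.isLt, hj])]
  exact ML2 U hUorth F hF ⟨j, hj⟩

lemma Pm_row {N k : ℕ} (U : Matrix (Fin N) (Fin N) ℝ) (hUorth : Uᵀ * U = 1)
    (F : Matrix (Fin N) (Fin k) ℝ) (hF : Fᵀ * F = 1) :
    ∀ i, ∑ j ∈ Finset.range k, Pm (Uᵀ * F) i j ≤ 1 := by
  intro i
  by_cases hi : i < N
  · rw [← sum_fin_ext (fun j : Fin k => ((Uᵀ * F) ⟨i, hi⟩ j)^2) _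
      (fun j => by simp [Pm, hi, j.isLt])]
    exact ML3 U hUorth F hF ⟨i, hi⟩
  · simp [Pm, hi]

lemma lower_bound {N k : ℕ} (hk : k ≤ N) (U : Matrix (Fin N) (Fin N) ℝ) (σ : Fin N → ℝ)
    (hUorth : Uᵀ * U = 1)
    (hanti : ∀ i j : Fin N, i ≤ j → σ j ≤ σ i)
    (hnonneg : ∀ i, 0 ≤ σ i)
    (F : Matrix (Fin N) (Fin k) ℝ) (s : Fin k → ℝ) (hF : Fᵀ * F = 1)
    (hsm : ∀ i j : Fin k, i ≤ j → s j ≤ s i) (hsn : ∀ i, 0 ≤ s i) :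
    ((∑ i, (σ i)^2) - ∑ j : Fin k, (σ (Fin.castLE hk j))^2)
      + ∑ j : Fin k, (s j - σ (Fin.castLE hk j))^2
      ≤ frobSq (U * Matrix.diagonal σ * Uᵀ - F * Matrix.diagonal s * Fᵀ) := by
  rw [ML1 U σ hUorth F s hF]
  set G := Uᵀ * F with hG
  have fσa : ∀ i j : ℕ, i ≤ j → extend N σ j ≤ extend N σ i := by
    intro i j hij
    unfold extend
    split_ifs with h1 h2 h2
    · exact hanti ⟨i, h2⟩ ⟨j, h1⟩ hij
    · omega
    · exact hnonneg _
    · exact le_refl 0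
  have fsa : ∀ i j : ℕ, i ≤ j → extend k s j ≤ extend k s i := by
    intro i j hij
    unfold extend
    split_ifs with h1 h2 h2
    · exact hsm ⟨i, h2⟩ ⟨j, h1⟩ hij
    · omega
    · exact hsn _
    · exact le_refl 0
  have fs0 : ∀ i, 0 ≤ extend k s i := by
    intro i; unfold extend; split_ifs
    · exact hsn _
    · exact le_refl 0
  have fsk : ∀ j, k ≤ j → extend k s j = 0 := by
    intro j hj; unfold extend; rw [dif_neg (by omega)]
  have key : ∑ j : Fin k, s j * ∑ i, σ i * (G i j)^2
      ≤ ∑ j : Fin k, s j * σ (Fin.castLE hk j) := by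
    have convL : ∑ j : Fin k, s j * ∑ i, σ i * (G i j)^2
        = ∑ j ∈ Finset.range k, extend k s j * (∑ i ∈ Finset.range N, extend N σ i * Pm G i j) := by
      apply sum_fin_ext
      intro j
      rw [extend_lt]
      congr 1
      rw [← sum_fin_ext (fun i : Fin N => σ i * (G i j)^2)
        (fun i => extend N σ i * Pm G i j)
        (fun i => by simp [extend_lt, Pm, i.isLt, j.isLt])]
    have convR : ∑ j : Fin k, s j * σ (Fin.castLE hk j)
        = ∑ j ∈ Finset.range k, extend k s j * extend N σ j := by
      apply sum_fin_ext
      intro j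
      rw [extend_lt]
      congr 1
      unfold extend
      rw [dif_pos (lt_of_lt_of_le j.isLt hk)]
      exact congrArg σ (Fin.ext (by simp))
    rw [convL, convR]
    exact kyfan N k (extend N σ) (Pm G) hk (extend k s) fσa fsa fs0 fsk
      (Pm_nonneg G) (Pm_col U hUorth F hF) (Pm_row U hUorth F hF)
  have expand : ∑ j : Fin k, (s j - σ (Fin.castLE hk j))^2
      = ∑ j : Fin k, (s j)^2 - 2 * ∑ j : Fin k, s j * σ (Fin.castLE hk j)
        + ∑ j : Fin k, (σ (Fin.castLE hk j))^2 := by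
    have h1 : ∀ j : Fin k, (s j - σ (Fin.castLE hk j))^2
        = s j^2 - 2*(s j * σ (Fin.castLE hk j)) + (σ (Fin.castLE hk j))^2 := fun j => by ring
    rw [Finset.sum_congr rfl fun j _ => h1 j, Finset.sum_add_distrib, Finset.sum_sub_distrib,
      ← Finset.mul_sum]
  linarith

lemma eq_case {N k : ℕ} (hk : k ≤ N) (U : Matrix (Fin N) (Fin N) ℝ) (σ : Fin N → ℝ)
    (hUorth : Uᵀ * U = 1)
    (hlo : ∀ t, t < k → ∀ i, i < t → extend N σ t < extend N σ i)
    (hhi : ∀ t, t < k → ∀ i, t < i → extend N σ i < extend N σ t)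
    (hposl : ∀ t, t < k → 0 < extend N σ t)
    (fσa : ∀ i j : ℕ, i ≤ j → extend N σ j ≤ extend N σ i)
    (F : Matrix (Fin N) (Fin k) ℝ) (hF : Fᵀ * F = 1)
    (hge : ∑ j : Fin k, σ (Fin.castLE hk j) * σ (Fin.castLE hk j)
      ≤ ∑ j : Fin k, σ (Fin.castLE hk j) * ∑ i, σ i * ((Uᵀ * F) i j)^2) :
    ∃ ε : Fin k → ℝ, (∀ j, ε j = 1 ∨ ε j = -1)
      ∧ F = U.submatrix id (Fin.castLE hk) * Matrix.diagonal ε := by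
  set G := Uᵀ * F with hG
  have hcastv : ∀ j : Fin k, extend N σ ↑j = σ (Fin.castLE hk j) := by
    intro j
    unfold extend
    rw [dif_pos (lt_of_lt_of_le j.isLt hk)]
    exact congrArg σ (Fin.ext (by simp))
  set τ : ℕ → ℝ := fun j => if j < k then extend N σ j else 0 with hτ
  have fτa : ∀ i j : ℕ, i ≤ j → τ j ≤ τ i := by
    intro i j hij
    simp only [hτ]
    split_ifs with h1 h2 h2
    · exact fσa i j hij
    · omega
    · exact (hposl i h2).le
    · exact le_refl 0
  have fτ0 : ∀ i, 0 ≤ τ i := by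
    intro i; simp only [hτ]; split_ifs with h
    · exact (hposl i h).le
    · exact le_refl 0
  have fτk : ∀ j, k ≤ j → τ j = 0 := by
    intro j hj; simp only [hτ]; rw [if_neg (by omega)]
  have convL : ∑ j : Fin k, σ (Fin.castLE hk j) * ∑ i, σ i * (G i j)^2
      = ∑ j ∈ Finset.range k, τ j * (∑ i ∈ Finset.range N, extend N σ i * Pm G i j) := by
    apply sum_fin_ext
    intro j
    have : τ ↑j = σ (Fin.castLE hk j) := by
      simp only [hτ]; rw [if_pos j.isLt]; exact hcastv j
    rw [this]
    congr 1
    rw [← sum_fin_ext (fun i : Fin N => σ i * (G i j)^2)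
      (fun i => extend N σ i * Pm G i j)
      (fun i => by simp [extend_lt, Pm, i.isLt, j.isLt])]
  have convR : ∑ j : Fin k, σ (Fin.castLE hk j) * σ (Fin.castLE hk j)
      = ∑ j ∈ Finset.range k, τ j * extend N σ j := by
    apply sum_fin_ext
    intro j
    have : τ ↑j = σ (Fin.castLE hk j) := by
      simp only [hτ]; rw [if_pos j.isLt]; exact hcastv j
    rw [this, hcastv j]
  have hle := kyfan N k (extend N σ) (Pm G) hk τ fσa fτa fτ0 fτk
    (Pm_nonneg G) (Pm_col U hUorth F hF) (Pm_row U hUorth F hF)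
  have heqn : ∑ j ∈ Finset.range k, extend N σ j * (∑ i ∈ Finset.range N, extend N σ i * Pm G i j)
      = ∑ j ∈ Finset.range k, extend N σ j * extend N σ j := by
    have e1 : ∑ j ∈ Finset.range k, extend N σ j * (∑ i ∈ Finset.range N, extend N σ i * Pm G i j)
        = ∑ j ∈ Finset.range k, τ j * (∑ i ∈ Finset.range N, extend N σ i * Pm G i j) :=
      Finset.sum_congr rfl fun j hj => by
        simp only [hτ]; rw [if_pos (Finset.mem_range.mp hj)]
    have e2 : ∑ j ∈ Finset.range k, extend N σ j * extend N σ j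
        = ∑ j ∈ Finset.range k, τ j * extend N σ j :=
      Finset.sum_congr rfl fun j hj => by
        simp only [hτ]; rw [if_pos (Finset.mem_range.mp hj)]
    rw [e1, e2]
    rw [← convL, ← convR]
    apply le_antisymm
    · rw [convL, convR]; exact hle
    · exact hge
  have hPij := kyfan_eq N k (extend N σ) (Pm G) hk hlo hhi hposl fσa
    (Pm_nonneg G) (Pm_col U hUorth F hF) (Pm_row U hUorth F hF) heqn
  -- translate back to Fin
  have hGsq : ∀ (i : Fin N) (j : Fin k), (G i j)^2 = if (i : ℕ) = (j : ℕ) then 1 else 0 := by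
    intro i j
    have := hPij i i.isLt j (j.isLt)
    simp only [Pm, i.isLt, j.isLt, dif_pos, Fin.eta] at this
    exact this
  refine ⟨fun j => G (Fin.castLE hk j) j, ?_, ?_⟩
  · intro j
    have h1 : (G (Fin.castLE hk j) j)^2 = 1 := by
      have h0 := hGsq (Fin.castLE hk j) j
      rw [if_pos (by simp : ((Fin.castLE hk j : Fin N) : ℕ) = (j : ℕ))] at h0
      exact h0
    have h2 : (G (Fin.castLE hk j) j - 1) * (G (Fin.castLE hk j) j + 1) = 0 := by nlinarith
    rcases mul_eq_zero.mp h2 with h | h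
    · left; linarith
    · right; linarith
  · have hU2 : U * Uᵀ = 1 := mul_eq_one_comm.mp hUorth
    have hFUG : F = U * G := by
      rw [hG, ← Matrix.mul_assoc, hU2, Matrix.one_mul]
    rw [hFUG]
    ext i j
    rw [Matrix.mul_apply, Matrix.mul_diagonal, Matrix.submatrix_apply]
    rw [Finset.sum_eq_single (Fin.castLE hk j)]
    · rfl
    · intro b _ hb
      have hbz : (G b j)^2 = 0 := by
        rw [hGsq b j, if_neg]
        intro hc
        exact hb (Fin.ext (by simpa using hc))
      have : G b j = 0 := by
        have := sq_eq_zero_iff.mp hbz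
        exact this
      rw [this, mul_zero]
    · intro h; exact absurd (Finset.mem_univ _) h
lemma cand_value {N k : ℕ} (hk : k ≤ N) (U : Matrix (Fin N) (Fin N) ℝ) (σ : Fin N → ℝ)
    (hUorth : Uᵀ * U = 1) (ε : Fin k → ℝ) (hε : ∀ j, ε j = 1 ∨ ε j = -1) :
    frobSq (U * Matrix.diagonal σ * Uᵀ
        - (U.submatrix id (Fin.castLE hk) * Matrix.diagonal ε)
          * Matrix.diagonal (fun j : Fin k => σ (Fin.castLE hk j))
          * (U.submatrix id (Fin.castLE hk) * Matrix.diagonal ε)ᵀ)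
      = (∑ i, (σ i)^2) - ∑ j : Fin k, (σ (Fin.castLE hk j))^2 := by
  rw [ML1 U σ hUorth _ _ (cand_orth hk U hUorth ε hε)]
  have hqq : ∑ j : Fin k, σ (Fin.castLE hk j)
      * ∑ i, σ i * ((Uᵀ * (U.submatrix id (Fin.castLE hk) * Matrix.diagonal ε)) i j)^2
      = ∑ j : Fin k, (σ (Fin.castLE hk j))^2 :=
    Finset.sum_congr rfl fun j _ => by rw [cand_q hk U σ hUorth ε hε j, sq]
  rw [hqq]
  ring

end GLUE
/-- **sign feature identifiability of triCL.**
Let `Ā = U Σ Uᵀ` be symmetric PSD with `U` orthogonal and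
`σ₁ > σ₂ > … > σ_k > σ_{k+1} ≥ … ≥ σ_N ≥ 0`, `σ_k > 0` (0-based indexing in Lean:
strict decrease through index `k`, nonincreasing afterwards, all nonnegative, first `k`
positive). Then over all pairs `(F, S)` with `FᵀF = I_k` and `S = diag(s)` with
nonincreasing nonnegative diagonal, the minimizers of `‖Ā − F S Fᵀ‖_F²` are exactly the
pairs with `s = (σ₁,…,σ_k)` and `F = Uᵏ E` for a diagonal `±1` matrix `E`. -/
theorem stmt_1 {N k : ℕ} (hk : k ≤ N)
    (Abar U : Matrix (Fin N) (Fin N) ℝ) (σ : Fin N → ℝ)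
    (hUorth : Uᵀ * U = 1)
    (hA : Abar = U * Matrix.diagonal σ * Uᵀ)
    (hstrict : ∀ i j : Fin N, i < j → (j : ℕ) ≤ k → σ j < σ i)
    (hmono : ∀ i j : Fin N, k ≤ (i : ℕ) → i ≤ j → σ j ≤ σ i)
    (hnonneg : ∀ i : Fin N, 0 ≤ σ i)
    (hpos : ∀ i : Fin N, (i : ℕ) < k → 0 < σ i) :
    ∀ (F : Matrix (Fin N) (Fin k) ℝ) (s : Fin k → ℝ),
      ((Fᵀ * F = 1 ∧ (∀ i j : Fin k, i ≤ j → s j ≤ s i) ∧ (∀ i : Fin k, 0 ≤ s i)) ∧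
        (∀ (F' : Matrix (Fin N) (Fin k) ℝ) (s' : Fin k → ℝ),
          F'ᵀ * F' = 1 → (∀ i j : Fin k, i ≤ j → s' j ≤ s' i) → (∀ i : Fin k, 0 ≤ s' i) →
          frobSq (Abar - F * Matrix.diagonal s * Fᵀ) ≤
            frobSq (Abar - F' * Matrix.diagonal s' * F'ᵀ)))
      ↔ ((s = fun j : Fin k => σ (Fin.castLE hk j)) ∧
          ∃ ε : Fin k → ℝ, (∀ j : Fin k, ε j = 1 ∨ ε j = -1) ∧
            F = U.submatrix id (Fin.castLE hk) * Matrix.diagonal ε) := by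
  have hanti : ∀ i j : Fin N, i ≤ j → σ j ≤ σ i := by
    intro i j hij
    by_cases hjk : (j : ℕ) ≤ k
    · rcases eq_or_lt_of_le hij with h | h
      · rw [h]
      · exact (hstrict i j h hjk).le
    · by_cases hik : k ≤ (i : ℕ)
      · exact hmono i j hik hij
      · push_neg at hjk hik
        have hkN : k < N := lt_trans hjk j.isLt
        have h1 : σ ⟨k, hkN⟩ < σ i :=
          hstrict i ⟨k, hkN⟩ (by rw [Fin.lt_def]; exact hik) (le_refl k)
        have h2 : σ j ≤ σ ⟨k, hkN⟩ :=
          hmono ⟨k, hkN⟩ j (le_refl k) (by rw [Fin.le_def]; exact hjk.le)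
        linarith
  have hcle : ∀ i j : Fin k, i ≤ j → Fin.castLE hk i ≤ Fin.castLE hk j := by
    intro i j hij
    rw [Fin.le_def, Fin.coe_castLE, Fin.coe_castLE]
    exact hij
  have fσa : ∀ a b : ℕ, a ≤ b → extend N σ b ≤ extend N σ a := by
    intro a b hab
    unfold extend
    split_ifs with h1 h2 h2
    · exact hanti ⟨a, h2⟩ ⟨b, h1⟩ (by rw [Fin.le_def]; exact hab)
    · omega
    · exact hnonneg _
    · exact le_refl 0
  have hlo : ∀ t, t < k → ∀ i, i < t → extend N σ t < extend N σ i := by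
    intro t ht i hit
    have htN : t < N := lt_of_lt_of_le ht hk
    have hiN : i < N := lt_trans hit htN
    unfold extend
    rw [dif_pos htN, dif_pos hiN]
    exact hstrict ⟨i, hiN⟩ ⟨t, htN⟩ (by rw [Fin.lt_def]; exact hit) (le_of_lt ht)
  have hposl : ∀ t, t < k → 0 < extend N σ t := by
    intro t ht
    unfold extend
    rw [dif_pos (lt_of_lt_of_le ht hk)]
    exact hpos _ ht
  have hhi : ∀ t, t < k → ∀ i, t < i → extend N σ i < extend N σ t := by
    intro t ht i hti
    have htN : t < N := lt_of_lt_of_le ht hk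
    by_cases hiN : i < N
    · unfold extend
      rw [dif_pos htN, dif_pos hiN]
      by_cases hik : i ≤ k
      · exact hstrict ⟨t, htN⟩ ⟨i, hiN⟩ (by rw [Fin.lt_def]; exact hti) hik
      · push_neg at hik
        have hkN : k < N := lt_trans hik hiN
        have h1 : σ ⟨i, hiN⟩ ≤ σ ⟨k, hkN⟩ :=
          hmono ⟨k, hkN⟩ ⟨i, hiN⟩ (le_refl k) (by rw [Fin.le_def]; exact hik.le)
        have h2 : σ ⟨k, hkN⟩ < σ ⟨t, htN⟩ := hstrict ⟨t, htN⟩ ⟨k, hkN⟩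
          (by rw [Fin.lt_def]; exact ht) (le_refl k)
        linarith
    · unfold extend
      rw [dif_pos htN, dif_neg hiN]
      exact hpos ⟨t, htN⟩ ht
  intro F s
  constructor
  · rintro ⟨⟨hFo, hsm, hsn⟩, hmin⟩
    have hε1 : ∀ j : Fin k, (fun _ : Fin k => (1:ℝ)) j = 1 ∨ (fun _ : Fin k => (1:ℝ)) j = -1 :=
      fun j => Or.inl rfl
    have hcOrth := cand_orth hk U hUorth (fun _ => 1) hε1
    have hm0 : ∀ i j : Fin k, i ≤ j → σ (Fin.castLE hk j) ≤ σ (Fin.castLE hk i) :=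
      fun i j hij => hanti _ _ (hcle i j hij)
    have hn0 : ∀ i : Fin k, 0 ≤ σ (Fin.castLE hk i) := fun i => hnonneg _
    have hminle := hmin (U.submatrix id (Fin.castLE hk) * Matrix.diagonal (fun _ => 1))
      (fun j => σ (Fin.castLE hk j)) hcOrth hm0 hn0
    have hval0 := cand_value hk U σ hUorth (fun _ => 1) hε1
    rw [← hA] at hval0
    rw [hval0] at hminle
    have hlow := lower_bound hk U σ hUorth hanti hnonneg F s hFo hsm hsn
    rw [← hA] at hlow
    have hsqle : ∑ j : Fin k, (s j - σ (Fin.castLE hk j))^2 ≤ 0 := by linarith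
    have hnnsq : ∀ j ∈ Finset.univ, 0 ≤ (s j - σ (Fin.castLE hk j))^2 := fun j _ => sq_nonneg _
    have hsqeq : ∀ j : Fin k, (s j - σ (Fin.castLE hk j))^2 = 0 := fun j =>
      (Finset.sum_eq_zero_iff_of_nonneg hnnsq).mp
        (le_antisymm hsqle (Finset.sum_nonneg hnnsq)) j (Finset.mem_univ j)
    have hs : s = fun j : Fin k => σ (Fin.castLE hk j) := funext fun j => by
      have := sq_eq_zero_iff.mp (hsqeq j)
      linarith [sub_eq_zero.mp this]
    refine ⟨hs, ?_⟩
    have hML := ML1 U σ hUorth F (fun j : Fin k => σ (Fin.castLE hk j)) hFo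
    rw [hs, hA, hML] at hminle
    beta_reduce at hminle
    have hsq2 : ∑ j : Fin k, (σ (Fin.castLE hk j))^2
        = ∑ j : Fin k, σ (Fin.castLE hk j) * σ (Fin.castLE hk j) :=
      Finset.sum_congr rfl fun j _ => sq _
    have hge : ∑ j : Fin k, σ (Fin.castLE hk j) * σ (Fin.castLE hk j)
        ≤ ∑ j : Fin k, σ (Fin.castLE hk j) * ∑ i, σ i * ((Uᵀ * F) i j)^2 := by
      rw [← hsq2]
      linarith
    exact eq_case hk U σ hUorth hlo hhi hposl fσa F hFo hge
  · rintro ⟨hs, ε, hε, hFd⟩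
    refine ⟨⟨?_, ?_, ?_⟩, ?_⟩
    · rw [hFd]
      exact cand_orth hk U hUorth ε hε
    · intro i j hij
      rw [hs]
      exact hanti _ _ (hcle i j hij)
    · intro i
      rw [hs]
      exact hnonneg _
    · intro F' s' hF' hm' hn'
      have hval := cand_value hk U σ hUorth ε hε
      rw [← hA] at hval
      have hlow := lower_bound hk U σ hUorth hanti hnonneg F' s' hF' hm' hn'
      rw [← hA] at hlow
      have hpos2 : 0 ≤ ∑ j : Fin k, (s' j - σ (Fin.castLE hk j))^2 :=
        Finset.sum_nonneg fun j _ => sq_nonneg _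
      rw [hFd, hs, hval]
      linarith
end

section
/- Let A ∈ ℝ^{N×N} have nonnegative entries with positive row sums d_x = ∑_{x'} A_{x x'} > 0 for every x, let Ā be the normalized matrix with entries Ā_{x x'} = A_{x x'} / √(d_x d_{x'}), let f : {1,…,N} → ℝ^k, let S ∈ ℝ^{k×k}, and let F ∈ ℝ^{N×k} be the matrix whose x-th row is √(d_x) · f(x)ᵀ. Then −2 ∑_{x,x'} A_{x x'} f(x)ᵀ S f(x') + ∑_{x,x'} d_x d_{x'} (f(x)ᵀ S f(x'))² = ‖Ā − F S Fᵀ‖_F² − ‖Ā‖_F². -/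
open Matrix BigOperators

/-- The tri-factor contrastive loss equals the matrix tri-factorization
objective `‖Ā − F S Fᵀ‖_F²` up to the additive constant `‖Ā‖_F²`, where
`Ā_{xx'} = A_{xx'}/√(d_x d_{x'})` and `F` has rows `√(d_x) f(x)ᵀ`. -/
theorem stmt_3 {N k : ℕ}
    (A : Matrix (Fin N) (Fin N) ℝ) (hA : ∀ x x' : Fin N, 0 ≤ A x x')
    (d : Fin N → ℝ) (hd : ∀ x : Fin N, d x = ∑ x', A x x')
    (hdpos : ∀ x : Fin N, 0 < d x)
    (f : Fin N → Fin k → ℝ) (S : Matrix (Fin k) (Fin k) ℝ)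
    (Abar : Matrix (Fin N) (Fin N) ℝ)
    (hAbar : ∀ x x' : Fin N, Abar x x' = A x x' / Real.sqrt (d x * d x'))
    (F : Matrix (Fin N) (Fin k) ℝ)
    (hF : ∀ (x : Fin N) (j : Fin k), F x j = Real.sqrt (d x) * f x j) :
    -2 * (∑ x, ∑ x', A x x' * (f x ⬝ᵥ S.mulVec (f x'))) +
      ∑ x, ∑ x', d x * d x' * (f x ⬝ᵥ S.mulVec (f x')) ^ 2 =
    frobSq (Abar - F * S * Fᵀ) - frobSq Abar := by
  have key : ∀ x x' : Fin N,
      (Abar - F * S * Fᵀ) x x' ^ 2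
        = Abar x x' ^ 2 - 2 * (A x x' * (f x ⬝ᵥ S.mulVec (f x')))
          + d x * d x' * (f x ⬝ᵥ S.mulVec (f x')) ^ 2 := by
    intro x x'
    have hFS : (F * S * Fᵀ) x x' =
        Real.sqrt (d x) * Real.sqrt (d x') * (f x ⬝ᵥ S.mulVec (f x')) := by
      simp only [Matrix.mul_apply, Matrix.transpose_apply, hF, dotProduct, Matrix.mulVec,
        Finset.sum_mul, Finset.mul_sum]
      rw [Finset.sum_comm]
      exact Finset.sum_congr rfl fun j _ => Finset.sum_congr rfl fun i _ => by ring
    have hx : (0:ℝ) < Real.sqrt (d x) := Real.sqrt_pos.2 (hdpos x)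
    have hx' : (0:ℝ) < Real.sqrt (d x') := Real.sqrt_pos.2 (hdpos x')
    have hsx : Real.sqrt (d x) ^ 2 = d x := Real.sq_sqrt (hdpos x).le
    have hsx' : Real.sqrt (d x') ^ 2 = d x' := Real.sq_sqrt (hdpos x').le
    have hsm : Real.sqrt (d x * d x') = Real.sqrt (d x) * Real.sqrt (d x') :=
      Real.sqrt_mul (hdpos x).le _
    rw [Matrix.sub_apply, hFS, hAbar, hsm]
    set t := f x ⬝ᵥ S.mulVec (f x')
    set s := Real.sqrt (d x) * Real.sqrt (d x') with hs
    have hsne : s ≠ 0 := by positivity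
    have hs2 : s ^ 2 = d x * d x' := by rw [hs, mul_pow, hsx, hsx']
    have h1 : A x x' / s * (s * t) = A x x' * t := by
      field_simp
    calc (A x x' / s - s * t) ^ 2
        = (A x x' / s) ^ 2 - 2 * (A x x' / s * (s * t)) + s ^ 2 * t ^ 2 := by ring
      _ = (A x x' / s) ^ 2 - 2 * (A x x' * t) + d x * d x' * t ^ 2 := by rw [h1, hs2]
  simp only [frobSq, key, Finset.sum_add_distrib, Finset.sum_sub_distrib]
  have h2 : ∑ x, ∑ x', 2 * (A x x' * (f x ⬝ᵥ S.mulVec (f x')))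
      = 2 * ∑ x, ∑ x', A x x' * (f x ⬝ᵥ S.mulVec (f x')) := by
    simp [Finset.mul_sum]
  rw [h2]
  ring
end

section
/- Let σ₁ ≥ σ₂ ≥ … ≥ σ_k ≥ 0 be real numbers and let 1 ≤ m < k. Then (1 − m/k) ∑_{i=1}^{k} σ_i² − ∑_{i=m+1}^{k} σ_i² = (m(k−m)/k) · [ (1/m) ∑_{i=1}^{m} σ_i² − (1/(k−m)) ∑_{i=m+1}^{k} σ_i² ] ≥ 0. Consequently, the upper bound U(f_SCL^(m)) = c₁((1 − m/k)∑_{i=1}^{k}σ_i² + ∑_{i>k}σ_i²) + c₂α for m randomly selected SCL features is at least the upper bound U(f_triCL^(m)) = c₁∑_{i=m+1}^{N}σ_i² + c₂α for the top m triCL features, for any constant c₁ ≥ 0. -/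
open BigOperators

/-- For `σ₁ ≥ … ≥ σ_k ≥ 0` and `1 ≤ m < k`:
`(1 − m/k) ∑_{i=1}^{k} σ_i² − ∑_{i=m+1}^{k} σ_i²
  = (m(k−m)/k)·[(1/m) ∑_{i=1}^{m} σ_i² − (1/(k−m)) ∑_{i=m+1}^{k} σ_i²] ≥ 0`.
Consequently, for any `c₁ ≥ 0`, the SCL upper bound
`c₁((1 − m/k) ∑_{i=1}^{k} σ_i² + ∑_{i=k+1}^{N} σ_i²) + c₂ α` is at least the triCL upper
bound `c₁ ∑_{i=m+1}^{N} σ_i² + c₂ α`. (Indices are 1-based, via `Finset.Icc`.) -/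
theorem stmt_9 {N k m : ℕ} (hm : 1 ≤ m) (hmk : m < k) (hkN : k ≤ N)
    (σ : ℕ → ℝ)
    (hmono : ∀ i j : ℕ, 1 ≤ i → i ≤ j → j ≤ k → σ j ≤ σ i)
    (hnonneg : ∀ i : ℕ, 1 ≤ i → i ≤ k → 0 ≤ σ i) :
    ((1 - (m : ℝ) / k) * ∑ i ∈ Finset.Icc 1 k, σ i ^ 2 - ∑ i ∈ Finset.Icc (m + 1) k, σ i ^ 2 =
      ((m : ℝ) * (k - m) / k) *
        ((1 / (m : ℝ)) * ∑ i ∈ Finset.Icc 1 m, σ i ^ 2 -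
          (1 / ((k : ℝ) - m)) * ∑ i ∈ Finset.Icc (m + 1) k, σ i ^ 2)) ∧
    (0 ≤ (1 - (m : ℝ) / k) * ∑ i ∈ Finset.Icc 1 k, σ i ^ 2 -
        ∑ i ∈ Finset.Icc (m + 1) k, σ i ^ 2) ∧
    (∀ c₁ c₂ α : ℝ, 0 ≤ c₁ →
      c₁ * (∑ i ∈ Finset.Icc (m + 1) N, σ i ^ 2) + c₂ * α ≤
        c₁ * ((1 - (m : ℝ) / k) * ∑ i ∈ Finset.Icc 1 k, σ i ^ 2 +
          ∑ i ∈ Finset.Icc (k + 1) N, σ i ^ 2) + c₂ * α) := by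
  have hIoc : ∀ a b : ℕ, Finset.Icc (a + 1) b = Finset.Ioc a b := by
    intro a b; rw [← Finset.Icc_add_one_left_eq_Ioc]
  have h1k : Finset.Icc 1 k = Finset.Ioc 0 k := hIoc 0 k
  have h1m : Finset.Icc 1 m = Finset.Ioc 0 m := hIoc 0 m
  rw [h1k, h1m, hIoc m k, hIoc m N, hIoc k N]
  set A := ∑ i ∈ Finset.Ioc 0 m, σ i ^ 2 with hA
  set B := ∑ i ∈ Finset.Ioc m k, σ i ^ 2 with hB
  have hsplit : A + B = ∑ i ∈ Finset.Ioc 0 k, σ i ^ 2 :=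
    Finset.sum_Ioc_consecutive _ (Nat.zero_le m) hmk.le
  have hsplitN : B + ∑ i ∈ Finset.Ioc k N, σ i ^ 2 = ∑ i ∈ Finset.Ioc m N, σ i ^ 2 :=
    Finset.sum_Ioc_consecutive _ hmk.le hkN
  have hk0 : (0:ℝ) < k := by exact_mod_cast Nat.zero_lt_of_lt hmk
  have hm0 : (0:ℝ) < m := by exact_mod_cast hm
  have hkm : (m:ℝ) < k := by exact_mod_cast hmk
  set s := σ (m + 1) ^ 2 with hs
  have hmk' : m + 1 ≤ k := hmk
  have hs0 : 0 ≤ s := sq_nonneg _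
  have hAge : (m:ℝ) * s ≤ A := by
    have := Finset.card_nsmul_le_sum (Finset.Ioc 0 m) (fun i => σ i ^ 2) s ?_
    · simpa [Nat.card_Ioc, nsmul_eq_mul] using this
    · intro i hi
      simp only [Finset.mem_Ioc] at hi
      have h1 : σ (m + 1) ≤ σ i := hmono i (m + 1) hi.1 (by omega) hmk'
      have h2 : 0 ≤ σ (m + 1) := hnonneg (m + 1) (by omega) hmk'
      exact pow_le_pow_left₀ h2 h1 2
  have hBle : B ≤ ((k:ℝ) - m) * s := by
    have := Finset.sum_le_card_nsmul (Finset.Ioc m k) (fun i => σ i ^ 2) s ?_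
    · have hc : ((k - m : ℕ) : ℝ) = (k:ℝ) - m := by
        have : m ≤ k := hmk.le
        push_cast [this]; ring
      simpa [Nat.card_Ioc, nsmul_eq_mul, hc] using this
    · intro i hi
      simp only [Finset.mem_Ioc] at hi
      have h1 : σ i ≤ σ (m + 1) := hmono (m + 1) i (by omega) (by omega) hi.2
      have h2 : 0 ≤ σ i := hnonneg i (by omega) hi.2
      exact pow_le_pow_left₀ h2 h1 2
  have hkey : (0:ℝ) ≤ ((k:ℝ) - m) * A - m * B := by
    nlinarith [mul_le_mul_of_nonneg_left hAge (by linarith : (0:ℝ) ≤ (k:ℝ) - m),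
      mul_le_mul_of_nonneg_left hBle (le_of_lt hm0)]
  rw [← hsplit]
  have hnn : 0 ≤ (1 - (m:ℝ)/k) * (A + B) - B := by
    have heq : (1 - (m:ℝ)/k) * (A + B) - B = (((k:ℝ) - m) * A - m * B) / k := by
      field_simp; ring
    rw [heq]
    exact div_nonneg hkey hk0.le
  have hne : (k:ℝ) - m ≠ 0 := by linarith
  refine ⟨?_, hnn, ?_⟩
  · field_simp
    ring
  · intro c₁ c₂ α hc₁
    rw [← hsplitN]
    have := mul_le_mul_of_nonneg_left hnn hc₁
    nlinarith [this]
end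

section
/- Let X̄ and X be finite sets, π : X̄ → ℝ≥0 with ∑_{x̄} π(x̄) = 1, and 𝒜 : X̄ × X → ℝ≥0 with ∑_{x} 𝒜(x̄, x) = 1 for every x̄ ∈ X̄. Let ȳ : X̄ → Y and y : X → Y be label functions into a set Y. Define A(x, x') = ∑_{x̄} π(x̄) 𝒜(x̄, x) 𝒜(x̄, x') and α = ∑_{x̄} π(x̄) ∑_{x} 𝒜(x̄, x) · 1[y(x) ≠ ȳ(x̄)]. Then ∑_{x, x'} A(x, x') · 1[y(x) ≠ y(x')] ≤ 2α. -/
open BigOperators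

/-- Let `π` be a distribution on natural samples, `𝒜(xb, ·)` the
augmentation distributions, `A(x,x') = ∑_{xb} π(xb) 𝒜(xb,x) 𝒜(xb,x')` the
augmentation-graph weights, and `α` the probability that a natural sample and its
augmentation have different labels. Then `∑_{x,x'} A(x,x') 1[y(x) ≠ y(x')] ≤ 2α`. -/
theorem stmt_10 {Xbar X Y : Type*} [Fintype Xbar] [Fintype X] [DecidableEq Y]
    (π : Xbar → ℝ) (hπ0 : ∀ xb : Xbar, 0 ≤ π xb) (hπ1 : ∑ xb, π xb = 1)
    (𝒜 : Xbar → X → ℝ) (h𝒜0 : ∀ (xb : Xbar) (x : X), 0 ≤ 𝒜 xb x)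
    (h𝒜1 : ∀ xb : Xbar, ∑ x, 𝒜 xb x = 1)
    (ybar : Xbar → Y) (y : X → Y)
    (A : X → X → ℝ) (hA : ∀ x x' : X, A x x' = ∑ xb, π xb * (𝒜 xb x * 𝒜 xb x'))
    (α : ℝ)
    (hα : α = ∑ xb, π xb * ∑ x, 𝒜 xb x * (if y x ≠ ybar xb then (1 : ℝ) else 0)) :
    ∑ x, ∑ x', A x x' * (if y x ≠ y x' then (1 : ℝ) else 0) ≤ 2 * α := by
  classical
  set f : Xbar → X → ℝ := fun xb x => if y x ≠ ybar xb then (1 : ℝ) else 0 with hf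
  set g : Xbar → X → X → ℝ :=
    fun xb x x' => π xb * (𝒜 xb x * 𝒜 xb x' * (if y x ≠ y x' then (1 : ℝ) else 0)) with hg
  have hLHS : ∑ x, ∑ x', A x x' * (if y x ≠ y x' then (1 : ℝ) else 0)
      = ∑ xb, π xb * ∑ x, ∑ x', 𝒜 xb x * 𝒜 xb x' * (if y x ≠ y x' then (1 : ℝ) else 0) := by
    have step1 : ∀ x : X, ∑ x', A x x' * (if y x ≠ y x' then (1 : ℝ) else 0)
        = ∑ xb, ∑ x', g xb x x' := by
      intro x
      rw [Finset.sum_comm]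
      refine Finset.sum_congr rfl fun x' _ => ?_
      rw [hA, Finset.sum_mul]
      exact Finset.sum_congr rfl fun xb _ => by simp only [hg]; ring
    simp only [step1]
    rw [Finset.sum_comm]
    refine Finset.sum_congr rfl fun xb _ => ?_
    simp only [hg, Finset.mul_sum]
  rw [hLHS, hα, Finset.mul_sum]
  apply Finset.sum_le_sum
  intro xb _
  rw [mul_comm (2 : ℝ), mul_assoc]
  apply mul_le_mul_of_nonneg_left _ (hπ0 xb)
  have key : ∑ x, ∑ x', 𝒜 xb x * 𝒜 xb x' * (if y x ≠ y x' then (1 : ℝ) else 0)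
      ≤ ∑ x, ∑ x', 𝒜 xb x * 𝒜 xb x' * (f xb x + f xb x') := by
    apply Finset.sum_le_sum; intro x _
    apply Finset.sum_le_sum; intro x' _
    apply mul_le_mul_of_nonneg_left _ (mul_nonneg (h𝒜0 xb x) (h𝒜0 xb x'))
    simp only [hf]
    split_ifs <;> simp_all <;> norm_num
  refine key.trans_eq ?_
  have expand : ∑ x, ∑ x', 𝒜 xb x * 𝒜 xb x' * (f xb x + f xb x')
      = (∑ x, 𝒜 xb x * f xb x) * (∑ x', 𝒜 xb x') + (∑ x, 𝒜 xb x) * (∑ x', 𝒜 xb x' * f xb x') := by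
    rw [Finset.sum_mul_sum, Finset.sum_mul_sum, ← Finset.sum_add_distrib]
    refine Finset.sum_congr rfl fun x _ => ?_
    rw [← Finset.sum_add_distrib]
    exact Finset.sum_congr rfl fun x' _ => by ring
  rw [expand, h𝒜1 xb, mul_one, one_mul]
  simp only [hf]
  ring
end

section
/- Let X̄ and X be finite sets, π : X̄ → ℝ≥0 with ∑_{x̄} π(x̄) = 1, 𝒜 : X̄ × X → ℝ≥0 with ∑_{x} 𝒜(x̄, x) = 1 for each x̄, labels ȳ : X̄ → {1,…,r} and y : X → {1,…,r}, and define A(x, x') = ∑_{x̄} π(x̄) 𝒜(x̄, x) 𝒜(x̄, x') and α = ∑_{x̄} π(x̄) ∑_{x} 𝒜(x̄, x) · 1[y(x) ≠ ȳ(x̄)]. Assume d_x = ∑_{x'} A(x, x') > 0 for all x. Let Ā_{x x'} = A(x, x')/√(d_x d_{x'}), let Y ∈ ℝ^{X×r} with Y_{x,j} = 1[y(x) = j], let C ∈ ℝ^{X×r} with C_{x,j} = √(d_x) · 1[y(x) = j], and let D^{1/2} = diag(√(d_x)). Then ‖D^{1/2} Y − Ā C‖_F² ≤ 4α. -/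
open Matrix BigOperators

/-- With `A` the augmentation-graph weights, `d` its (positive) degrees,
`Ā` the degree-normalized adjacency matrix, `Y` the one-hot label matrix,
`C_{x,j} = √(d_x) 1[y(x)=j]`, `D^{1/2} = diag(√d)`, and `α` the label-flip probability of
augmentation, we have `‖D^{1/2} Y − Ā C‖_F² ≤ 4α`. -/
theorem stmt_11 {Xbar X : Type*} [Fintype Xbar] [Fintype X] [DecidableEq X] {r : ℕ}
    (π : Xbar → ℝ) (hπ0 : ∀ xb : Xbar, 0 ≤ π xb) (hπ1 : ∑ xb, π xb = 1)
    (𝒜 : Xbar → X → ℝ) (h𝒜0 : ∀ (xb : Xbar) (x : X), 0 ≤ 𝒜 xb x)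
    (h𝒜1 : ∀ xb : Xbar, ∑ x, 𝒜 xb x = 1)
    (ybar : Xbar → Fin r) (y : X → Fin r)
    (A : X → X → ℝ) (hA : ∀ x x' : X, A x x' = ∑ xb, π xb * (𝒜 xb x * 𝒜 xb x'))
    (α : ℝ)
    (hα : α = ∑ xb, π xb * ∑ x, 𝒜 xb x * (if y x ≠ ybar xb then (1 : ℝ) else 0))
    (d : X → ℝ) (hd : ∀ x : X, d x = ∑ x', A x x') (hdpos : ∀ x : X, 0 < d x)
    (Abar : Matrix X X ℝ)
    (hAbar : ∀ x x' : X, Abar x x' = A x x' / Real.sqrt (d x * d x'))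
    (Y : Matrix X (Fin r) ℝ) (hY : ∀ (x : X) (j : Fin r), Y x j = if y x = j then 1 else 0)
    (C : Matrix X (Fin r) ℝ)
    (hC : ∀ (x : X) (j : Fin r), C x j = Real.sqrt (d x) * (if y x = j then 1 else 0))
    (Dhalf : Matrix X X ℝ) (hD : Dhalf = Matrix.diagonal fun x => Real.sqrt (d x)) :
    frobSq (Dhalf * Y - Abar * C) ≤ 4 * α := by
  classical
  have hA0 : ∀ x x', 0 ≤ A x x' := by
    intro x x'
    rw [hA]
    exact Finset.sum_nonneg fun xb _ => mul_nonneg (hπ0 xb) (mul_nonneg (h𝒜0 xb x) (h𝒜0 xb x'))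
  set β : X → ℝ := fun x => ∑ x', A x x' * (if y x' ≠ y x then (1:ℝ) else 0) with hβ
  have hβ0 : ∀ x, 0 ≤ β x := by
    intro x
    exact Finset.sum_nonneg fun x' _ => mul_nonneg (hA0 x x') (by positivity)
  have hβd : ∀ x, β x ≤ d x := by
    intro x
    rw [hd]
    apply Finset.sum_le_sum
    intro x' _
    have := hA0 x x'
    split_ifs <;> nlinarith
  -- entry formula
  have hsqrt_pos : ∀ x, 0 < Real.sqrt (d x) := fun x => Real.sqrt_pos.mpr (hdpos x)
  have hentry : ∀ (x : X) (j : Fin r), (Dhalf * Y - Abar * C) x j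
      = (∑ x', A x x' * ((if y x = j then (1:ℝ) else 0) - (if y x' = j then 1 else 0)))
          / Real.sqrt (d x) := by
    intro x j
    have h1 : (Dhalf * Y) x j = Real.sqrt (d x) * (if y x = j then (1:ℝ) else 0) := by
      rw [hD, Matrix.diagonal_mul, hY]
    have h2 : (Abar * C) x j
        = (∑ x', A x x' * (if y x' = j then (1:ℝ) else 0)) / Real.sqrt (d x) := by
      rw [Matrix.mul_apply, Finset.sum_div]
      apply Finset.sum_congr rfl
      intro x' _
      rw [hAbar, hC, Real.sqrt_mul (le_of_lt (hdpos x))]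
      have hx := (hsqrt_pos x).ne'
      have hx' := (hsqrt_pos x').ne'
      field_simp
    have h3 : Real.sqrt (d x) * (if y x = j then (1:ℝ) else 0)
        = (∑ x', A x x' * (if y x = j then (1:ℝ) else 0)) / Real.sqrt (d x) := by
      rw [← Finset.sum_mul, ← hd, eq_div_iff (hsqrt_pos x).ne', mul_right_comm,
        Real.mul_self_sqrt (le_of_lt (hdpos x))]
    rw [Matrix.sub_apply, h1, h2, h3, div_sub_div_same]
    congr 1
    rw [← Finset.sum_sub_distrib]
    apply Finset.sum_congr rfl
    intro x' _
    ring
  -- sum of squares ≤ square of sum for nonneg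
  have sq_sum : ∀ (s : Finset (Fin r)) (f : Fin r → ℝ), (∀ j ∈ s, 0 ≤ f j) →
      ∑ j ∈ s, (f j)^2 ≤ (∑ j ∈ s, f j)^2 := by
    intro s f hf
    calc ∑ j ∈ s, (f j)^2 ≤ ∑ j ∈ s, f j * ∑ i ∈ s, f i := by
          apply Finset.sum_le_sum
          intro j hj
          have h1 : f j ≤ ∑ i ∈ s, f i := Finset.single_le_sum hf hj
          nlinarith [hf j hj]
      _ = (∑ j ∈ s, f j)^2 := by rw [← Finset.sum_mul]; ring
  -- row bound
  have hrow : ∀ x, ∑ j, ((Dhalf * Y - Abar * C) x j)^2 ≤ 2 * β x := by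
    intro x
    set S : Fin r → ℝ := fun j =>
      ∑ x', A x x' * ((if y x = j then (1:ℝ) else 0) - (if y x' = j then 1 else 0)) with hS
    have key : ∑ j, (S j)^2 ≤ 2 * (β x)^2 := by
      have hyx : S (y x) = β x := by
        rw [hS, hβ]
        apply Finset.sum_congr rfl
        intro x' _
        by_cases h : y x' = y x <;> simp [h]
      have hrest : ∑ j ∈ Finset.univ.erase (y x), (S j)^2 ≤ (β x)^2 := by
        have hSneg : ∀ j ∈ Finset.univ.erase (y x),
            S j = -(∑ x', A x x' * (if y x' = j then (1:ℝ) else 0)) := by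
          intro j hj
          have hne : y x ≠ j := fun h => (Finset.mem_erase.mp hj).1 h.symm
          rw [hS, ← Finset.sum_neg_distrib]
          apply Finset.sum_congr rfl
          intro x' _
          simp [hne]
        have hTsum : ∑ j ∈ Finset.univ.erase (y x),
            (∑ x', A x x' * (if y x' = j then (1:ℝ) else 0)) = β x := by
          rw [Finset.sum_comm, hβ]
          apply Finset.sum_congr rfl
          intro x' _
          rw [← Finset.mul_sum]
          congr 1
          rw [Finset.sum_ite_eq (Finset.univ.erase (y x)) (y x') (fun _ => (1:ℝ))]
          by_cases h : y x' = y x <;> simp [h]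
        calc ∑ j ∈ Finset.univ.erase (y x), (S j)^2
            = ∑ j ∈ Finset.univ.erase (y x),
              (∑ x', A x x' * (if y x' = j then (1:ℝ) else 0))^2 := by
              apply Finset.sum_congr rfl
              intro j hj
              rw [hSneg j hj]; ring
          _ ≤ (∑ j ∈ Finset.univ.erase (y x),
              (∑ x', A x x' * (if y x' = j then (1:ℝ) else 0)))^2 := by
              apply sq_sum
              intro j _
              exact Finset.sum_nonneg fun x' _ => mul_nonneg (hA0 x x') (by positivity)
          _ = (β x)^2 := by rw [hTsum]
      have hsplit : ∑ j, (S j)^2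
          = (S (y x))^2 + ∑ j ∈ Finset.univ.erase (y x), (S j)^2 := by
        rw [← Finset.add_sum_erase _ _ (Finset.mem_univ (y x))]
      rw [hsplit, hyx]
      linarith
    have : ∑ j, ((Dhalf * Y - Abar * C) x j)^2 = (∑ j, (S j)^2) / d x := by
      rw [Finset.sum_div]
      apply Finset.sum_congr rfl
      intro j _
      rw [hentry, div_pow, Real.sq_sqrt (le_of_lt (hdpos x))]
    rw [this]
    rw [div_le_iff₀ (hdpos x)]
    have h1 : (β x)^2 ≤ β x * d x := by nlinarith [hβ0 x, hβd x]
    nlinarith [key]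
  -- sum of β bound
  have hsum : ∑ x, β x ≤ 2 * α := by
    have hβeq : ∀ x, β x = ∑ x', ∑ xb, π xb * (𝒜 xb x * 𝒜 xb x')
        * (if y x' ≠ y x then (1:ℝ) else 0) := by
      intro x
      rw [hβ]
      apply Finset.sum_congr rfl
      intro x' _
      rw [hA, Finset.sum_mul]
    have hind : ∀ (xb : Xbar) (x x' : X),
        (if y x' ≠ y x then (1:ℝ) else 0)
          ≤ (if y x ≠ ybar xb then (1:ℝ) else 0) + (if y x' ≠ ybar xb then (1:ℝ) else 0) := by
      intro xb x x'
      by_cases h1 : y x = ybar xb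
      · by_cases h2 : y x' = ybar xb
        · have hyy : y x' = y x := h2.trans h1.symm
          simp [hyy, h1, h2]
        · have e1 : (if y x ≠ ybar xb then (1:ℝ) else 0) = 0 := by simp [h1]
          have e2 : (if y x' ≠ ybar xb then (1:ℝ) else 0) = 1 := if_pos h2
          rw [e1, e2]
          have : (if y x' ≠ y x then (1:ℝ) else 0) ≤ 1 := by split_ifs <;> norm_num
          linarith
      · have e1 : (if y x ≠ ybar xb then (1:ℝ) else 0) = 1 := if_pos h1
        rw [e1]
        have hl : (if y x' ≠ y x then (1:ℝ) else 0) ≤ 1 := by split_ifs <;> norm_num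
        have hr : (0:ℝ) ≤ (if y x' ≠ ybar xb then (1:ℝ) else 0) := by positivity
        linarith
    calc ∑ x, β x
        ≤ ∑ x, ∑ x', ∑ xb, π xb * (𝒜 xb x * 𝒜 xb x')
          * ((if y x ≠ ybar xb then (1:ℝ) else 0) + (if y x' ≠ ybar xb then (1:ℝ) else 0)) := by
          apply Finset.sum_le_sum; intro x _
          rw [hβeq]
          apply Finset.sum_le_sum; intro x' _
          apply Finset.sum_le_sum; intro xb _
          have hnn : 0 ≤ π xb * (𝒜 xb x * 𝒜 xb x') :=
            mul_nonneg (hπ0 xb) (mul_nonneg (h𝒜0 xb x) (h𝒜0 xb x'))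
          exact mul_le_mul_of_nonneg_left (hind xb x x') hnn
      _ = ∑ xb, ∑ x, ∑ x', π xb * (𝒜 xb x * 𝒜 xb x')
          * ((if y x ≠ ybar xb then (1:ℝ) else 0) + (if y x' ≠ ybar xb then (1:ℝ) else 0)) := by
          rw [show (∑ x, ∑ x', ∑ xb, π xb * (𝒜 xb x * 𝒜 xb x')
              * ((if y x ≠ ybar xb then (1:ℝ) else 0) + (if y x' ≠ ybar xb then (1:ℝ) else 0)))
            = ∑ x, ∑ xb, ∑ x', π xb * (𝒜 xb x * 𝒜 xb x')
              * ((if y x ≠ ybar xb then (1:ℝ) else 0) + (if y x' ≠ ybar xb then (1:ℝ) else 0))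
            from Finset.sum_congr rfl fun x _ => Finset.sum_comm]
          exact Finset.sum_comm
      _ = ∑ xb, π xb * (2 * ∑ x, 𝒜 xb x * (if y x ≠ ybar xb then (1:ℝ) else 0)) := by
          apply Finset.sum_congr rfl
          intro xb _
          have expand : ∀ x x' : X, π xb * (𝒜 xb x * 𝒜 xb x')
              * ((if y x ≠ ybar xb then (1:ℝ) else 0) + (if y x' ≠ ybar xb then (1:ℝ) else 0))
            = π xb * ((𝒜 xb x * (if y x ≠ ybar xb then (1:ℝ) else 0)) * 𝒜 xb x')
              + π xb * (𝒜 xb x * (𝒜 xb x' * (if y x' ≠ ybar xb then (1:ℝ) else 0))) :=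
            fun x x' => by ring
          simp_rw [expand, Finset.sum_add_distrib, ← Finset.mul_sum, ← Finset.sum_mul]
          rw [h𝒜1 xb]
          ring
      _ = 2 * α := by
          rw [hα, Finset.mul_sum]
          apply Finset.sum_congr rfl
          intro xb _
          ring
  -- conclude
  have : frobSq (Dhalf * Y - Abar * C) ≤ ∑ x, 2 * β x := by
    unfold frobSq
    exact Finset.sum_le_sum fun x _ => hrow x
  rw [← Finset.mul_sum] at this
  linarith
end

section
/- Let X_A and X_B be finite sets, P_O : X_A × X_B → ℝ≥0 a joint weight function, and P_A : X_A → ℝ>0, P_B : X_B → ℝ>0 strictly positive weight functions. Let f_A : X_A → ℝ^k, f_B : X_B → ℝ^k, and S ∈ ℝ^{k×k}. Define the normalized matrix P̄_O ∈ ℝ^{X_A×X_B} with entries (P̄_O)_{a b} = P_O(a, b)/√(P_A(a) P_B(b)), and matrices F_A, F_B whose rows are √(P_A(a)) · f_A(a)ᵀ and √(P_B(b)) · f_B(b)ᵀ respectively. Then −2 ∑_{a,b} P_O(a, b) f_A(a)ᵀ S f_B(b) + ∑_{a,b} P_A(a) P_B(b) (f_A(a)ᵀ S f_B(b))² = ‖P̄_O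 − F_A S F_Bᵀ‖_F² − ‖P̄_O‖_F². -/
open Matrix BigOperators

/-- The asymmetric tri-factor contrastive loss equals the matrix
tri-factorization objective `‖P̄_O − F_A S F_Bᵀ‖_F²` up to the additive constant
`‖P̄_O‖_F²`, where `(P̄_O)_{ab} = P_O(a,b)/√(P_A(a) P_B(b))` and the rows of `F_A, F_B`
are `√(P_A(a)) f_A(a)ᵀ` and `√(P_B(b)) f_B(b)ᵀ`. -/
theorem stmt_16 {XA XB : Type*} [Fintype XA] [Fintype XB] {k : ℕ}
    (PO : XA → XB → ℝ) (hPO : ∀ (a : XA) (b : XB), 0 ≤ PO a b)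
    (PA : XA → ℝ) (hPA : ∀ a : XA, 0 < PA a)
    (PB : XB → ℝ) (hPB : ∀ b : XB, 0 < PB b)
    (fA : XA → Fin k → ℝ) (fB : XB → Fin k → ℝ) (S : Matrix (Fin k) (Fin k) ℝ)
    (PObar : Matrix XA XB ℝ)
    (hPObar : ∀ (a : XA) (b : XB), PObar a b = PO a b / Real.sqrt (PA a * PB b))
    (FA : Matrix XA (Fin k) ℝ)
    (hFA : ∀ (a : XA) (j : Fin k), FA a j = Real.sqrt (PA a) * fA a j)
    (FB : Matrix XB (Fin k) ℝ)
    (hFB : ∀ (b : XB) (j : Fin k), FB b j = Real.sqrt (PB b) * fB b j) :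
    -2 * (∑ a, ∑ b, PO a b * (fA a ⬝ᵥ S.mulVec (fB b))) +
      ∑ a, ∑ b, PA a * PB b * (fA a ⬝ᵥ S.mulVec (fB b)) ^ 2 =
    frobSq (PObar - FA * S * FBᵀ) - frobSq PObar := by
  have key : ∀ (a : XA) (b : XB),
      (FA * S * FBᵀ) a b
        = Real.sqrt (PA a) * Real.sqrt (PB b) * (fA a ⬝ᵥ S.mulVec (fB b)) := by
    intro a b
    simp only [Matrix.mul_apply, Matrix.transpose_apply, hFA, hFB, dotProduct,
      Matrix.mulVec, Finset.sum_mul, Finset.mul_sum]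
    rw [Finset.sum_comm]
    apply Finset.sum_congr rfl
    intro j _
    apply Finset.sum_congr rfl
    intro i _
    ring
  unfold frobSq
  rw [Finset.mul_sum, ← Finset.sum_sub_distrib, ← Finset.sum_add_distrib]
  apply Finset.sum_congr rfl
  intro a _
  rw [Finset.mul_sum, ← Finset.sum_sub_distrib, ← Finset.sum_add_distrib]
  apply Finset.sum_congr rfl
  intro b _
  have hsA : Real.sqrt (PA a) ^ 2 = PA a := Real.sq_sqrt (hPA a).le
  have hsB : Real.sqrt (PB b) ^ 2 = PB b := Real.sq_sqrt (hPB b).le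
  have hmul : Real.sqrt (PA a * PB b) = Real.sqrt (PA a) * Real.sqrt (PB b) :=
    Real.sqrt_mul (hPA a).le _
  have hA0 : Real.sqrt (PA a) ≠ 0 := (Real.sqrt_pos.mpr (hPA a)).ne'
  have hB0 : Real.sqrt (PB b) ≠ 0 := (Real.sqrt_pos.mpr (hPB b)).ne'
  rw [Matrix.sub_apply, key, hPObar, hmul, ← hsA, ← hsB]
  field_simp
  rw [Real.sqrt_sq (Real.sqrt_nonneg (PA a)), Real.sqrt_sq (Real.sqrt_nonneg (PB b))]
  ring
end
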